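/- Let 0 < p ≤ 1, ε > 0, and let C ⊆ ℝ^m be a nonempty set. Let z⁰ ∈ C, define the weights ω_i := (p/2)((z⁰_i)² + ε²)^{p/2 − 1}, and suppose z¹ ∈ C minimizes the quadratic Q(z; ω) = Σ_{i=1}^m ω_i z_i² over C, i.e., Σ_i ω_i (z¹_i)² ≤ Σ_i ω_i x_i² for all x ∈ C. Then f_p(z¹; ε) ≤ f_p(z⁰; ε); that is, one majorization–minimization step does not increase the smoothed ℓ_p objective. -/

import Mathlib

open Finset

lemma rpow_concave_tangent {a b q : ℝ} (ha : 0 < a) (hb : 0 ≤ b) (hq0 : 0 ≤ q)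
    (hq1 : q ≤ 1) : b ^ q ≤ a ^ q + q * a ^ (q - 1) * (b - a) := by
  have hs : (-1 : ℝ) ≤ b / a - 1 := by
    have : 0 ≤ b / a := div_nonneg hb ha.le
    linarith
  have h := rpow_one_add_le_one_add_mul_self hs hq0 hq1
  have h1 : (1 + (b / a - 1)) = b / a := by ring
  rw [h1] at h
  have haq : 0 < a ^ q := Real.rpow_pos_of_pos ha q
  have h2 : (b / a) ^ q * a ^ q ≤ (1 + q * (b / a - 1)) * a ^ q := by
    exact mul_le_mul_of_nonneg_right h haq.le
  rw [Real.div_rpow hb ha.le, div_mul_cancel₀ _ (ne_of_gt (Real.rpow_pos_of_pos ha q))] at h2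
  calc b ^ q ≤ (1 + q * (b / a - 1)) * a ^ q := h2
    _ = a ^ q + q * (a ^ q / a) * (b - a) := by field_simp
    _ = a ^ q + q * a ^ (q - 1) * (b - a) := by
        rw [← Real.rpow_sub_one (ne_of_gt ha)]

/-- One majorization–minimization step does not increase the smoothed ℓ_p
objective: if `z¹ ∈ C` minimizes the majorizing quadratic `Q(z; ω)` (with
MM weights `ω` computed at `z⁰ ∈ C`) over `C`, then
`f_p(z¹; ε) ≤ f_p(z⁰; ε)`. -/
theorem mm_step_decreases (m : ℕ) (p ε : ℝ) (hp : 0 < p) (hp1 : p ≤ 1) (hε : 0 < ε)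
    (C : Set (Fin m → ℝ)) (hC : C.Nonempty)
    (z0 z1 : Fin m → ℝ) (hz0 : z0 ∈ C) (hz1 : z1 ∈ C)
    (hmin : ∀ x ∈ C,
      ∑ i, (p / 2 * ((z0 i) ^ 2 + ε ^ 2) ^ (p / 2 - 1)) * (z1 i) ^ 2
        ≤ ∑ i, (p / 2 * ((z0 i) ^ 2 + ε ^ 2) ^ (p / 2 - 1)) * (x i) ^ 2) :
    ∑ i, ((z1 i) ^ 2 + ε ^ 2) ^ (p / 2) ≤ ∑ i, ((z0 i) ^ 2 + ε ^ 2) ^ (p / 2) := by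
  have key : ∀ i : Fin m,
      ((z1 i) ^ 2 + ε ^ 2) ^ (p / 2) ≤ ((z0 i) ^ 2 + ε ^ 2) ^ (p / 2)
        + (p / 2) * ((z0 i) ^ 2 + ε ^ 2) ^ (p / 2 - 1)
          * (((z1 i) ^ 2 + ε ^ 2) - ((z0 i) ^ 2 + ε ^ 2)) := by
    intro i
    exact rpow_concave_tangent (by positivity) (by positivity) (by linarith) (by linarith)
  have hsum := Finset.sum_le_sum (s := Finset.univ) (fun i _ => key i)
  have hmin0 := hmin z0 hz0
  calc ∑ i, ((z1 i) ^ 2 + ε ^ 2) ^ (p / 2)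
      ≤ ∑ i, (((z0 i) ^ 2 + ε ^ 2) ^ (p / 2)
        + (p / 2) * ((z0 i) ^ 2 + ε ^ 2) ^ (p / 2 - 1)
          * (((z1 i) ^ 2 + ε ^ 2) - ((z0 i) ^ 2 + ε ^ 2))) := hsum
    _ = ∑ i, ((z0 i) ^ 2 + ε ^ 2) ^ (p / 2)
        + (∑ i, (p / 2 * ((z0 i) ^ 2 + ε ^ 2) ^ (p / 2 - 1)) * (z1 i) ^ 2
          - ∑ i, (p / 2 * ((z0 i) ^ 2 + ε ^ 2) ^ (p / 2 - 1)) * (z0 i) ^ 2) := by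
        rw [Finset.sum_add_distrib, ← Finset.sum_sub_distrib]
        congr 1
        apply Finset.sum_congr rfl
        intro i _; ring
    _ ≤ ∑ i, ((z0 i) ^ 2 + ε ^ 2) ^ (p / 2) := by linarith
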